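/- Let F : ℝ³ → ℝ be smooth, let U ⊆ ℝ³ be open, and let g : U → ℝ be a smooth nowhere-vanishing function satisfying X_F(g) = (g/2)·∂₁F on U. Regard X_F as the vector field p = (t, x₀, x₁) ↦ (1, x₁, F(p)) on ℝ³, and let g·∂₁ denote the vector field p ↦ (0, 0, g(p)). Then the iterated Lie bracket satisfies [X_F, [X_F, g·∂₁]] = −K₀ · (g·∂₁) at every point of U. -/

import Mathlib

/-- Partial derivative in the `i`-th coordinate direction on `ℝⁿ = (Fin n → ℝ)`. -/
noncomputable def pd {n : ℕ} (i : Fin n) (f : (Fin n → ℝ) → ℝ) : (Fin n → ℝ) → ℝ :=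
  fun x => fderiv ℝ f x (Pi.single i 1)

/-- Lie bracket of vector fields: `[X, Y](x) = DY(x)(X(x)) − DX(x)(Y(x))`. -/
noncomputable def lieBracket {n : ℕ} (X Y : (Fin n → ℝ) → (Fin n → ℝ)) :
    (Fin n → ℝ) → (Fin n → ℝ) :=
  fun x => fderiv ℝ Y x (X x) - fderiv ℝ X x (Y x)

/- Coordinates on `ℝ³` are `(t, x₀, x₁)`: `∂_t = pd 0`, `∂₀ = pd 1`, `∂₁ = pd 2`,
`x₁ = p 2`. -/

/-- Total derivative `X_F = ∂_t + x₁·∂₀ + F·∂₁` (as a differential operator). -/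
noncomputable def XF (F : (Fin 3 → ℝ) → ℝ) (u : (Fin 3 → ℝ) → ℝ) : (Fin 3 → ℝ) → ℝ :=
  fun p => pd 0 u p + p 2 * pd 1 u p + F p * pd 2 u p

/-- `X_F` regarded as a vector field on `ℝ³`: `p ↦ (1, x₁, F(p))`. -/
noncomputable def XFvf (F : (Fin 3 → ℝ) → ℝ) : (Fin 3 → ℝ) → (Fin 3 → ℝ) :=
  fun p => ![1, p 2, F p]

/-- The curvature `K₀ = −∂₀F + (1/2)X_F(∂₁F) − (1/4)(∂₁F)²`. -/
noncomputable def K0 (F : (Fin 3 → ℝ) → ℝ) : (Fin 3 → ℝ) → ℝ :=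
  fun p => -(pd 1 F p) + (1/2) * XF F (pd 2 F) p - (1/4) * (pd 2 F p)^2

lemma vec3_eq (a b c : ℝ) : (![a,b,c] : Fin 3 → ℝ)
    = a • (Pi.single 0 1 : Fin 3 → ℝ) + b • (Pi.single 1 1 : Fin 3 → ℝ)
      + c • (Pi.single 2 1 : Fin 3 → ℝ) := by
  funext i; fin_cases i <;> simp

lemma clm_vec3 (φ : (Fin 3 → ℝ) →L[ℝ] ℝ) (a b c : ℝ) :
    φ ![a,b,c] = a * φ (Pi.single 0 1) + b * φ (Pi.single 1 1) + c * φ (Pi.single 2 1) := by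
  rw [vec3_eq]; simp

lemma fderiv_apply_vec3 (f : (Fin 3 → ℝ) → ℝ) (p : Fin 3 → ℝ) (a b c : ℝ) :
    fderiv ℝ f p ![a,b,c] = a * pd 0 f p + b * pd 1 f p + c * pd 2 f p := by
  simpa [pd] using clm_vec3 (fderiv ℝ f p) a b c

lemma pd_contDiff {F : (Fin 3 → ℝ) → ℝ} (hF : ContDiff ℝ (⊤ : ℕ∞) F) (i : Fin 3) :
    ContDiff ℝ (⊤ : ℕ∞) (pd i F) :=
  (hF.fderiv_right (by simp)).clm_apply contDiff_const

lemma lieBr_apply {n : ℕ} (X Y : (Fin n → ℝ) → (Fin n → ℝ)) (p : Fin n → ℝ)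
    (hX : ∀ i, DifferentiableAt ℝ (fun q => X q i) p)
    (hY : ∀ i, DifferentiableAt ℝ (fun q => Y q i) p) (i : Fin n) :
    (fderiv ℝ Y p (X p) - fderiv ℝ X p (Y p)) i
      = fderiv ℝ (fun q => Y q i) p (X p) - fderiv ℝ (fun q => X q i) p (Y p) := by
  rw [fderiv_pi hX, fderiv_pi hY]
  simp

lemma fderiv_apply_X (F f : (Fin 3 → ℝ) → ℝ) (p : Fin 3 → ℝ) :
    fderiv ℝ f p (XFvf F p) = XF F f p := by
  simp [XFvf, XF, fderiv_apply_vec3]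

lemma X_comp_diff (F : (Fin 3 → ℝ) → ℝ) (hF : ContDiff ℝ (⊤ : ℕ∞) F) (p : Fin 3 → ℝ) :
    ∀ i, DifferentiableAt ℝ (fun q => XFvf F q i) p := by
  intro i
  fin_cases i <;> simp only [XFvf, Matrix.cons_val_zero, Matrix.cons_val_one, Matrix.head_cons,
    Fin.mk_one, Fin.isValue, Matrix.cons_val_two, Matrix.tail_cons]
  · exact differentiableAt_const 1
  · exact (ContinuousLinearMap.proj 2 : (Fin 3 → ℝ) →L[ℝ] ℝ).differentiableAt
  · exact (hF.differentiable (by simp)).differentiableAt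

noncomputable def Wn (F g : (Fin 3 → ℝ) → ℝ) : (Fin 3 → ℝ) → (Fin 3 → ℝ) :=
  fun q => ![0, -g q, -(1/2) * (g q * pd 2 F q)]

lemma brA (F : (Fin 3 → ℝ) → ℝ) (hF : ContDiff ℝ (⊤ : ℕ∞) F)
    (U : Set (Fin 3 → ℝ)) (hU : IsOpen U)
    (g : (Fin 3 → ℝ) → ℝ) (hg : ContDiffOn ℝ (⊤ : ℕ∞) g U)
    (hgeq : ∀ p ∈ U, XF F g p = (g p / 2) * pd 2 F p) :
    Set.EqOn (lieBracket (XFvf F) (fun q => ![0, 0, g q])) (Wn F g) U := by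
  intro q hq
  have hgq : DifferentiableAt ℝ g q := (hg.contDiffAt (hU.mem_nhds hq)).differentiableAt (by simp)
  have hV : ∀ i, DifferentiableAt ℝ (fun r => (![0, 0, g r] : Fin 3 → ℝ) i) q := by
    intro i
    fin_cases i <;> simp only [Matrix.cons_val_zero, Matrix.cons_val_one, Matrix.head_cons,
      Fin.mk_one, Fin.isValue, Matrix.cons_val_two, Matrix.tail_cons]
    · exact differentiableAt_const 0
    · exact differentiableAt_const 0
    · exact hgq
  funext i
  show (fderiv ℝ (fun q => ![0, 0, g q]) q (XFvf F q)
      - fderiv ℝ (XFvf F) q ((fun q => (![0, 0, g q] : Fin 3 → ℝ)) q)) i = _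
  rw [lieBr_apply _ _ q (X_comp_diff F hF q) hV i]
  have hproj : fderiv ℝ (fun r : Fin 3 → ℝ => r 2) q
      = ContinuousLinearMap.proj 2 := by
    exact (ContinuousLinearMap.proj (R := ℝ) (φ := fun _ : Fin 3 => ℝ) 2).fderiv
  fin_cases i
  · show fderiv ℝ (fun _ : Fin 3 → ℝ => (0:ℝ)) q (XFvf F q)
        - fderiv ℝ (fun _ : Fin 3 → ℝ => (1:ℝ)) q ![0, 0, g q] = (0:ℝ)
    simp
  · show fderiv ℝ (fun _ : Fin 3 → ℝ => (0:ℝ)) q (XFvf F q)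
        - fderiv ℝ (fun r : Fin 3 → ℝ => r 2) q ![0, 0, g q] = -g q
    rw [hproj]
    simp
  · show fderiv ℝ g q (XFvf F q) - fderiv ℝ F q ![0, 0, g q]
        = -(1/2) * (g q * pd 2 F q)
    rw [fderiv_apply_X, fderiv_apply_vec3, hgeq q hq]
    ring

/-- equation (eq_b) for `k = 1`: for a nowhere-vanishing solution `g`
of `X_F(g) = (g/2)·∂₁F`, the iterated Lie bracket satisfies
`[X_F, [X_F, g·∂₁]] = −K₀·(g·∂₁)` on `U`. -/
theorem bracket_relation_order2 (F : (Fin 3 → ℝ) → ℝ) (hF : ContDiff ℝ (⊤ : ℕ∞) F)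
    (U : Set (Fin 3 → ℝ)) (hU : IsOpen U)
    (g : (Fin 3 → ℝ) → ℝ) (hg : ContDiffOn ℝ (⊤ : ℕ∞) g U)
    (hg0 : ∀ p ∈ U, g p ≠ 0)
    (hgeq : ∀ p ∈ U, XF F g p = (g p / 2) * pd 2 F p) :
    ∀ p ∈ U,
      lieBracket (XFvf F) (lieBracket (XFvf F) (fun q => ![0, 0, g q])) p
        = (-(K0 F p)) • (![0, 0, g p] : Fin 3 → ℝ) := by
  intro p hp
  have hA := brA F hF U hU g hg hgeq
  have hev : (lieBracket (XFvf F) (fun q => ![0, 0, g q])) =ᶠ[nhds p] Wn F g :=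
    Filter.eventuallyEq_of_mem (hU.mem_nhds hp) hA
  have hgp : DifferentiableAt ℝ g p := (hg.contDiffAt (hU.mem_nhds hp)).differentiableAt (by simp)
  have hpd2 : DifferentiableAt ℝ (pd 2 F) p :=
    ((pd_contDiff hF 2).differentiable (by simp)).differentiableAt
  have hWdiff : ∀ i, DifferentiableAt ℝ (fun q => Wn F g q i) p := by
    intro i
    fin_cases i
    · exact differentiableAt_const 0
    · show DifferentiableAt ℝ (fun q => -g q) p
      exact hgp.neg
    · show DifferentiableAt ℝ (fun q => -(1/2) * (g q * pd 2 F q)) p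
      exact (hgp.mul hpd2).const_mul _
  have key : lieBracket (XFvf F) (lieBracket (XFvf F) (fun q => ![0, 0, g q])) p
      = fderiv ℝ (Wn F g) p (XFvf F p) - fderiv ℝ (XFvf F) p (Wn F g p) := by
    show fderiv ℝ (lieBracket (XFvf F) fun q => ![0, 0, g q]) p (XFvf F p)
        - fderiv ℝ (XFvf F) p ((lieBracket (XFvf F) fun q => ![0, 0, g q]) p) = _
    rw [hev.fderiv_eq, hA hp]
  rw [key]
  have hproj : fderiv ℝ (fun r : Fin 3 → ℝ => r 2) p = ContinuousLinearMap.proj 2 := by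
    exact (ContinuousLinearMap.proj (R := ℝ) (φ := fun _ : Fin 3 => ℝ) 2).fderiv
  funext i
  rw [lieBr_apply _ _ p (X_comp_diff F hF p) hWdiff i]
  fin_cases i
  · show fderiv ℝ (fun _ : Fin 3 → ℝ => (0:ℝ)) p (XFvf F p)
        - fderiv ℝ (fun _ : Fin 3 → ℝ => (1:ℝ)) p (Wn F g p)
        = (-(K0 F p) • (![0, 0, g p] : Fin 3 → ℝ)) 0
    simp
  · show fderiv ℝ (fun q => -g q) p (XFvf F p)
        - fderiv ℝ (fun r : Fin 3 → ℝ => r 2) p (Wn F g p)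
        = (-(K0 F p) • (![0, 0, g p] : Fin 3 → ℝ)) 1
    rw [fderiv_fun_neg, hproj]
    simp only [ContinuousLinearMap.neg_apply, ContinuousLinearMap.proj_apply]
    rw [fderiv_apply_X]
    show -(XF F g p) - (-(1/2) * (g p * pd 2 F p)) = -(K0 F p) * 0
    rw [hgeq p hp]
    ring
  · show fderiv ℝ (fun q => -(1/2) * (g q * pd 2 F q)) p (XFvf F p)
        - fderiv ℝ F p (Wn F g p) = -(K0 F p) * g p
    rw [fderiv_const_mul (a := fun q => g q * pd 2 F q) (hgp.mul hpd2),
      fderiv_fun_mul hgp hpd2]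
    simp only [ContinuousLinearMap.smul_apply, ContinuousLinearMap.add_apply, smul_eq_mul]
    rw [fderiv_apply_X, fderiv_apply_X]
    rw [show Wn F g p = ![0, -g p, -(1/2) * (g p * pd 2 F p)] from rfl, fderiv_apply_vec3,
      hgeq p hp]
    simp only [K0]
    ring
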